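/- arXiv:1505.03735 — 4 statements merged into one kernel-verified Lean document; each statement's English description precedes it below -/
import Mathlib

section
/- Let n ≥ 2. Every tame algebraic automorphism of ℂⁿ that fixes the origin is induced, via the projection π₁ : SL_n(ℂ) → ℂⁿ onto the first column, by some algebraic automorphism of SL_n(ℂ); i.e., for every such tame automorphism ψ there exists an algebraic automorphism φ of SL_n(ℂ) with π₁ ∘ φ = ψ ∘ π₁. -/
/-!
Liftable automorphisms of `ℂⁿ` form a group, so it suffices to lift generators. The generators
need not fix the origin, so one lifts all recentrings `v ↦ ψ (v + p) - ψ p` of `ψ` instead: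
these are compatible with products and inverses, and recentrings of affine and elementary maps
are linear maps and elementary maps fixing `0`.

An invertible linear map `A` is lifted by `X ↦ A * X * B`, where the diagonal matrix `B` fixes
the first column and corrects the determinant in a second one. An elementary map
`x ↦ x + h x • eᵢ` with `h 0 = 0` is lifted by a row operation: write `h = ∑ gₗ * Xₗ` and add
`∑_{l ≠ i} gₗ(x') • rowₗ` to row `i`, where `x'` is the first column with its `i`-th entry set
to `0`. This changes the first column by exactly `h x • eᵢ` and leaves `x'` unchanged, so the
row operation with `-g` inverts it.
-/

open Matrix

noncomputable section

abbrev SL (n : ℕ) := Matrix.SpecialLinearGroup (Fin n) ℂ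

/-- A self-map of `SL n ℂ` is regular (algebraic) if each matrix entry of the image is
given by a polynomial in the matrix entries of the argument. -/
def SLRegular {n : ℕ} (φ : SL n → SL n) : Prop :=
  ∀ i j : Fin n, ∃ P : MvPolynomial (Fin n × Fin n) ℂ,
    ∀ X : SL n, (φ X : Matrix (Fin n) (Fin n) ℂ) i j =
      MvPolynomial.eval (fun kl => (X : Matrix (Fin n) (Fin n) ℂ) kl.1 kl.2) P

/-- An algebraic automorphism of `SL n ℂ`: a regular map with a regular inverse. -/
def SLAlgAut {n : ℕ} (φ : SL n → SL n) : Prop :=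
  SLRegular φ ∧ ∃ ψ : SL n → SL n, SLRegular ψ ∧
    Function.LeftInverse ψ φ ∧ Function.RightInverse ψ φ

/-- An invertible affine-linear self-map of `ℂⁿ`. -/
def IsAffineAut (n : ℕ) (e : (Fin n → ℂ) → (Fin n → ℂ)) : Prop :=
  ∃ A : Matrix (Fin n) (Fin n) ℂ, IsUnit A.det ∧ ∃ b : Fin n → ℂ,
    ∀ v, e v = A.mulVec v + b

/-- An elementary automorphism of `ℂⁿ`: it adds to one coordinate a polynomial in the
other coordinates. -/
def IsElemAut (n : ℕ) (e : (Fin n → ℂ) → (Fin n → ℂ)) : Prop :=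
  ∃ i : Fin n, ∃ h : MvPolynomial (Fin n) ℂ,
    h ∈ MvPolynomial.supported ℂ {j : Fin n | j ≠ i} ∧
    ∀ v j, e v j = if j = i then v i + MvPolynomial.eval v h else v j

/-- A tame automorphism of `ℂⁿ`: an element of the group generated by invertible affine
maps and elementary automorphisms. -/
def IsTame (n : ℕ) (ψ : Equiv.Perm (Fin n → ℂ)) : Prop :=
  ψ ∈ Subgroup.closure {e : Equiv.Perm (Fin n → ℂ) | IsAffineAut n ⇑e ∨ IsElemAut n ⇑e}


open MvPolynomial

namespace MvPolynomial

lemma eval_eq_of_mem_supported {σ R : Type*} [CommSemiring R] {s : Set σ}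
    {p : MvPolynomial σ R} (hp : p ∈ supported R s) {x y : σ → R}
    (hxy : ∀ j ∈ s, x j = y j) : eval x p = eval y p :=
  eval₂Hom_congr' rfl (fun j hj _ => hxy j (mem_supported.1 hp hj)) rfl

lemma exists_sum_mul_X_eq {σ R : Type*} [Fintype σ] [CommSemiring R] {p : MvPolynomial σ R}
    (hp : constantCoeff p = 0) : ∃ g : σ → MvPolynomial σ R, ∑ s, g s * X s = p := by
  have hmem : p ∈ idealOfVars σ R := by
    simpa using (mem_pow_idealOfVars_iff' 1 p).2 fun x hx => by
      rw [(Finsupp.degree_eq_zero_iff x).1 (Nat.lt_one_iff.1 hx), ← constantCoeff_eq, hp]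
  exact Ideal.mem_span_range_iff_exists_fun.1 hmem

lemma bind₁_mem_supported {σ R : Type*} [CommSemiring R] {s : Set σ}
    {f : σ → MvPolynomial σ R} (hf : ∀ j ∈ s, f j ∈ supported R s) {p : MvPolynomial σ R}
    (hp : p ∈ supported R s) : bind₁ f p ∈ supported R s := by
  have : (supported R s).map (bind₁ f) ≤ supported R s := by
    rw [supported, AlgHom.map_adjoin]
    refine Algebra.adjoin_le ?_
    rintro _ ⟨_, ⟨j, hj, rfl⟩, rfl⟩
    rw [bind₁_X_right]
    exact hf j hj
  exact this ⟨p, hp, rfl⟩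

lemma aeval_pi_apply {σ S R : Type*} [CommSemiring R] (g : σ → S → R)
    (P : MvPolynomial σ R) (x : S) : aeval g P x = eval (fun s => g s x) P := by
  change (Pi.evalAlgHom R (fun _ => R) x).comp (aeval g) P = _
  rw [comp_aeval, ← coe_aeval_eq_eval]
  rfl

end MvPolynomial

section RegularFunctions

variable {n : ℕ}

variable (n) in
def regularFunctions : Subalgebra ℂ (SL n → ℂ) :=
  (aeval fun (kl : Fin n × Fin n) (X : SL n) => (X : Matrix (Fin n) (Fin n) ℂ) kl.1 kl.2).range

lemma mem_regularFunctions_iff {f : SL n → ℂ} :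
    f ∈ regularFunctions n ↔ ∃ P : MvPolynomial (Fin n × Fin n) ℂ,
      ∀ X : SL n, f X = eval (fun kl => (X : Matrix (Fin n) (Fin n) ℂ) kl.1 kl.2) P := by
  simp only [regularFunctions, AlgHom.mem_range, funext_iff, aeval_pi_apply, eq_comm]

lemma sLRegular_iff {φ : SL n → SL n} :
    SLRegular φ ↔ ∀ i j, (fun X => (φ X : Matrix (Fin n) (Fin n) ℂ) i j) ∈ regularFunctions n := by
  simp only [SLRegular, mem_regularFunctions_iff]

lemma entry_mem_regularFunctions (i j : Fin n) :
    (fun X : SL n => (X : Matrix (Fin n) (Fin n) ℂ) i j) ∈ regularFunctions n :=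
  ⟨X (i, j), aeval_X _ _⟩

lemma aeval_mem_regularFunctions {σ : Type*} {f : σ → SL n → ℂ}
    (hf : ∀ s, f s ∈ regularFunctions n) (P : MvPolynomial σ ℂ) :
    aeval f P ∈ regularFunctions n := by
  have : (aeval f).range ≤ regularFunctions n := by
    rw [← Algebra.adjoin_range_eq_range_aeval]
    exact Algebra.adjoin_le (Set.range_subset_iff.2 hf)
  exact this ⟨P, rfl⟩

lemma eval_mem_regularFunctions {σ : Type*} {f : σ → SL n → ℂ}
    (hf : ∀ s, f s ∈ regularFunctions n) (P : MvPolynomial σ ℂ) :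
    (fun X => eval (fun s => f s X) P) ∈ regularFunctions n := by
  rw [← funext (aeval_pi_apply f P)]
  exact aeval_mem_regularFunctions hf P

lemma comp_mem_regularFunctions {φ : SL n → SL n} (hφ : SLRegular φ) {f : SL n → ℂ}
    (hf : f ∈ regularFunctions n) : f ∘ φ ∈ regularFunctions n := by
  obtain ⟨P, hP⟩ := mem_regularFunctions_iff.1 hf
  convert eval_mem_regularFunctions (fun kl => sLRegular_iff.1 hφ kl.1 kl.2) P using 1
  exact funext fun X => hP (φ X)

lemma sLRegular_of_eq_mul {φ : SL n → SL n} (L : SL n → Matrix (Fin n) (Fin n) ℂ)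
    (R : Matrix (Fin n) (Fin n) ℂ) (hL : ∀ i j, (fun X => L X i j) ∈ regularFunctions n)
    (hφ : ∀ X, (φ X : Matrix (Fin n) (Fin n) ℂ) = L X * X * R) : SLRegular φ := by
  refine sLRegular_iff.2 fun i j => ?_
  have : (fun X => (φ X : Matrix (Fin n) (Fin n) ℂ) i j) =
      ∑ l, ∑ k, (fun X => L X i k) * (fun X : SL n => (X : Matrix (Fin n) (Fin n) ℂ) k l) *
        algebraMap ℂ (SL n → ℂ) (R l j) := by
    ext X
    simp [hφ, Matrix.mul_apply, Finset.sum_mul]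
  rw [this]
  exact Subalgebra.sum_mem _ fun l _ => Subalgebra.sum_mem _ fun k _ =>
    Subalgebra.mul_mem _ (Subalgebra.mul_mem _ (hL i k) (entry_mem_regularFunctions k l))
      (Subalgebra.algebraMap_mem _ _)

lemma SLRegular.id : SLRegular (id : SL n → SL n) :=
  sLRegular_iff.2 entry_mem_regularFunctions

lemma SLRegular.comp {φ₂ φ₁ : SL n → SL n} (h₂ : SLRegular φ₂) (h₁ : SLRegular φ₁) :
    SLRegular (φ₂ ∘ φ₁) :=
  sLRegular_iff.2 fun i j => comp_mem_regularFunctions h₁ (sLRegular_iff.1 h₂ i j)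

end RegularFunctions

section AlgebraicAutomorphisms

variable {n : ℕ}

lemma SLAlgAut.id : SLAlgAut (id : SL n → SL n) :=
  ⟨.id, _root_.id, .id, fun _ => rfl, fun _ => rfl⟩

lemma SLAlgAut.comp {φ₂ φ₁ : SL n → SL n} (h₂ : SLAlgAut φ₂) (h₁ : SLAlgAut φ₁) :
    SLAlgAut (φ₂ ∘ φ₁) := by
  obtain ⟨r₂, ψ₂, s₂, l₂, r₂'⟩ := h₂
  obtain ⟨r₁, ψ₁, s₁, l₁, r₁'⟩ := h₁
  exact ⟨r₂.comp r₁, ψ₁ ∘ ψ₂, s₁.comp s₂, l₂.comp l₁, r₂'.comp r₁'⟩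

lemma exists_sLAlgAut_mul_mul (A B : Matrix (Fin n) (Fin n) ℂ) (hAB : A.det * B.det = 1) :
    ∃ φ : SL n → SL n, SLAlgAut φ ∧ ∀ X, (φ X : Matrix (Fin n) (Fin n) ℂ) = A * X * B := by
  have hA : IsUnit A.det := IsUnit.of_mul_eq_one _ hAB
  have hB : IsUnit B.det := IsUnit.of_mul_eq_one_right _ hAB
  let φ (X : SL n) : SL n := ⟨A * X * B, by simp [Matrix.det_mul, X.prop, hAB]⟩
  let ψ (X : SL n) : SL n := ⟨A⁻¹ * X * B⁻¹, by
    simp [Matrix.det_mul, X.prop, Matrix.det_nonsing_inv, ← mul_inv, hAB]⟩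
  refine ⟨φ, ⟨sLRegular_of_eq_mul _ B (fun _ _ => Subalgebra.algebraMap_mem _ _) fun _ => rfl,
    ψ, sLRegular_of_eq_mul _ B⁻¹ (fun _ _ => Subalgebra.algebraMap_mem _ _) fun _ => rfl,
    fun X => ?_, fun X => ?_⟩, fun _ => rfl⟩ <;> ext1
  · simp [φ, ψ, Matrix.mul_assoc, Matrix.nonsing_inv_mul_cancel_left _ _ hA,
      Matrix.mul_nonsing_inv _ hB]
  · simp [φ, ψ, Matrix.mul_assoc, Matrix.mul_nonsing_inv_cancel_left _ _ hA,
      Matrix.nonsing_inv_mul _ hB]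

end AlgebraicAutomorphisms

section Liftable

variable {n : ℕ}

def column (c : Fin n) (X : SL n) : Fin n → ℂ :=
  fun k => (X : Matrix (Fin n) (Fin n) ℂ) k c

variable (n) in
def liftable (c : Fin n) : Subgroup (Equiv.Perm (Fin n → ℂ)) where
  carrier := {ψ | ∃ φ : SL n → SL n, SLAlgAut φ ∧ ∀ X, column c (φ X) = ψ (column c X)}
  one_mem' := ⟨_root_.id, .id, fun _ => rfl⟩
  mul_mem' := by
    rintro ψ₂ ψ₁ ⟨φ₂, h₂, hc₂⟩ ⟨φ₁, h₁, hc₁⟩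
    exact ⟨φ₂ ∘ φ₁, h₂.comp h₁, fun X => by simp [hc₁, hc₂]⟩
  inv_mem' := by
    rintro ψ ⟨φ, ⟨hφ, φ', hφ', hleft, hright⟩, hc⟩
    refine ⟨φ', ⟨hφ', φ, hφ, hright, hleft⟩, fun X => ?_⟩
    rw [Equiv.Perm.eq_inv_iff_eq, ← hc, hright]

lemma mem_liftable_of_mulVec (hn : 2 ≤ n) (c : Fin n) {e : Equiv.Perm (Fin n → ℂ)}
    {A : Matrix (Fin n) (Fin n) ℂ} (hA : IsUnit A.det) (he : ∀ v, e v = A *ᵥ v) :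
    e ∈ liftable n c := by
  have : Nontrivial (Fin n) := Fin.nontrivial_iff_two_le.2 hn
  obtain ⟨d, hd⟩ := exists_ne c
  let B : Matrix (Fin n) (Fin n) ℂ := diagonal (Function.update 1 d A.det⁻¹)
  obtain ⟨φ, hφ, hφB⟩ := exists_sLAlgAut_mul_mul A B (by
    simp [B, det_diagonal, Finset.prod_update_of_mem, hA.ne_zero])
  refine ⟨φ, hφ, fun X => funext fun k => ?_⟩
  simp only [column, hφB, B, Matrix.mul_diagonal, Function.update_of_ne hd.symm, Pi.one_apply,
    mul_one, he]
  rfl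

end Liftable

section RowOperations

lemma det_one_add_vecMulVec_single {m R : Type*} [Fintype m] [DecidableEq m] [CommRing R]
    {i : m} {a : m → R} (ha : a i = 0) :
    (1 + vecMulVec (Pi.single i 1) a).det = 1 := by
  rw [vecMulVec_eq Unit, det_one_add_replicateCol_mul_replicateRow]
  simp [ha]

lemma one_add_vecMulVec_neg_mul {m R : Type*} [Fintype m] [DecidableEq m] [CommRing R]
    {i : m} {a : m → R} (ha : a i = 0) :
    (1 + vecMulVec (Pi.single i 1) (-a)) * (1 + vecMulVec (Pi.single i 1) a) = 1 := by
  rw [add_mul, mul_add, mul_add, vecMulVec_mul_vecMulVec]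
  simp [ha]

variable {n : ℕ} (c i : Fin n) (a : (Fin n → ℂ) → Fin n → ℂ) (ha : ∀ x, a x i = 0)

def rowOpLift (X : SL n) : SL n :=
  ⟨(1 + vecMulVec (Pi.single i 1) (a (column c X))) * X, by
    rw [det_mul, det_one_add_vecMulVec_single (ha _), X.prop, one_mul]⟩

lemma column_rowOpLift (X : SL n) :
    column c (rowOpLift c i a ha X) =
      column c X + (a (column c X) ⬝ᵥ column c X) • Pi.single i 1 := by
  change (1 + vecMulVec (Pi.single i 1) (a (column c X))) *ᵥ column c X = _
  rw [add_mulVec, one_mulVec, vecMulVec_mulVec, op_smul_eq_smul]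

lemma rowOpLift_neg_rowOpLift (ha_inv : ∀ x (s : ℂ), a (x + s • Pi.single i 1) = a x)
    (X : SL n) :
    rowOpLift c i (-a) (fun x => by simp [ha x]) (rowOpLift c i a ha X) = X := by
  apply Subtype.ext
  change (1 + vecMulVec (Pi.single i 1) (-a (column c (rowOpLift c i a ha X)))) *
    ((1 + vecMulVec (Pi.single i 1) (a (column c X))) * X) = X
  rw [column_rowOpLift, ha_inv, ← Matrix.mul_assoc, one_add_vecMulVec_neg_mul (ha _),
    Matrix.one_mul]

lemma sLRegular_rowOpLift (ha_reg : ∀ l, (fun X => a (column c X) l) ∈ regularFunctions n) :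
    SLRegular (rowOpLift c i a ha) := by
  refine sLRegular_of_eq_mul _ 1 (fun r l => ?_) fun X => (Matrix.mul_one _).symm
  have : (fun X => (1 + vecMulVec (Pi.single i 1) (a (column c X))) r l) =
      algebraMap ℂ (SL n → ℂ) ((1 : Matrix (Fin n) (Fin n) ℂ) r l) +
        algebraMap ℂ (SL n → ℂ) ((Pi.single i 1 : Fin n → ℂ) r) * fun X => a (column c X) l := by
    ext X
    simp [vecMulVec_apply]
  rw [this]
  exact Subalgebra.add_mem _ (Subalgebra.algebraMap_mem _ _)
    (Subalgebra.mul_mem _ (Subalgebra.algebraMap_mem _ _) (ha_reg l))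

lemma sLAlgAut_rowOpLift (ha_inv : ∀ x (s : ℂ), a (x + s • Pi.single i 1) = a x)
    (ha_reg : ∀ l, (fun X => a (column c X) l) ∈ regularFunctions n) :
    SLAlgAut (rowOpLift c i a ha) := by
  have hna_inv : ∀ x (s : ℂ), (-a) (x + s • Pi.single i 1) = (-a) x := by simp [ha_inv]
  have hna_reg : ∀ l, (fun X => (-a) (column c X) l) ∈ regularFunctions n :=
    fun l => Subalgebra.neg_mem _ (ha_reg l)
  refine ⟨sLRegular_rowOpLift c i a ha ha_reg, _, sLRegular_rowOpLift c i (-a) _ hna_reg,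
    rowOpLift_neg_rowOpLift c i a ha ha_inv, fun X => ?_⟩
  simpa only [neg_neg] using rowOpLift_neg_rowOpLift c i (-a) _ hna_inv X

end RowOperations

section ElementaryAutomorphisms

variable {n : ℕ} (i : Fin n) (g : Fin n → MvPolynomial (Fin n) ℂ)

def rowOpCoeffs (x : Fin n → ℂ) : Fin n → ℂ :=
  Function.update (fun l => eval (Function.update x i 0) (g l)) i 0

lemma rowOpCoeffs_self (x : Fin n → ℂ) : rowOpCoeffs i g x i = 0 :=
  Function.update_self ..

lemma rowOpCoeffs_add_smul_single (x : Fin n → ℂ) (s : ℂ) :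
    rowOpCoeffs i g (x + s • Pi.single i 1) = rowOpCoeffs i g x := by
  have : Function.update (x + s • Pi.single i 1) i 0 = Function.update x i 0 := by
    ext j
    by_cases hj : j = i <;> simp [hj]
  simp only [rowOpCoeffs, this]

lemma rowOpCoeffs_column_mem_regularFunctions (c l : Fin n) :
    (fun X => rowOpCoeffs i g (column c X) l) ∈ regularFunctions n := by
  by_cases hl : l = i
  · simp only [rowOpCoeffs, hl, Function.update_self]
    exact Subalgebra.zero_mem _
  · simp only [rowOpCoeffs, Function.update_of_ne hl]
    refine eval_mem_regularFunctions (fun j => ?_) (g l)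
    by_cases hj : j = i
    · simp only [hj, Function.update_self]
      exact Subalgebra.zero_mem _
    · simp only [Function.update_of_ne hj]
      exact entry_mem_regularFunctions j c

lemma rowOpCoeffs_dotProduct {h : MvPolynomial (Fin n) ℂ}
    (hsupp : h ∈ supported ℂ {j : Fin n | j ≠ i}) (hg : ∑ l, g l * X l = h) (x : Fin n → ℂ) :
    rowOpCoeffs i g x ⬝ᵥ x = eval x h := by
  rw [eval_eq_of_mem_supported hsupp (y := Function.update x i 0)
    fun j hj => (Function.update_of_ne hj ..).symm, ← hg]
  simp only [dotProduct, map_sum, eval_mul, eval_X]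
  refine Finset.sum_congr rfl fun l _ => ?_
  by_cases hl : l = i <;> simp [rowOpCoeffs, hl]

end ElementaryAutomorphisms

lemma mem_liftable_of_isElemAut {n : ℕ} (c : Fin n) {e : Equiv.Perm (Fin n → ℂ)}
    (he : IsElemAut n e) (he0 : e 0 = 0) : e ∈ liftable n c := by
  obtain ⟨i, h, hsupp, he⟩ := he
  obtain ⟨g, hg⟩ := exists_sum_mul_X_eq (p := h) (by simpa [he, eval_zero] using congrFun he0 i)
  refine ⟨rowOpLift c i (rowOpCoeffs i g) (rowOpCoeffs_self i g),
    sLAlgAut_rowOpLift c i _ _ (rowOpCoeffs_add_smul_single i g)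
      (rowOpCoeffs_column_mem_regularFunctions i g c), fun X => ?_⟩
  ext j
  rw [column_rowOpLift, rowOpCoeffs_dotProduct i g hsupp hg, he]
  by_cases hj : j = i <;> simp [hj]

section Recentre

variable {V : Type*} [AddGroup V]

def recentre (ψ : Equiv.Perm V) (p : V) : Equiv.Perm V :=
  (Equiv.addRight p).trans (ψ.trans (Equiv.subRight (ψ p)))

@[simp]
lemma recentre_apply (ψ : Equiv.Perm V) (p v : V) : recentre ψ p v = ψ (v + p) - ψ p := rfl

lemma recentre_one (p : V) : recentre 1 p = 1 := by
  ext v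
  simp

lemma recentre_mul (ψ₂ ψ₁ : Equiv.Perm V) (p : V) :
    recentre (ψ₂ * ψ₁) p = recentre ψ₂ (ψ₁ p) * recentre ψ₁ p := by
  ext v
  simp

lemma recentre_inv (ψ : Equiv.Perm V) (p : V) :
    recentre ψ⁻¹ p = (recentre ψ (ψ⁻¹ p))⁻¹ := by
  ext v
  rw [Equiv.Perm.eq_inv_iff_eq]
  simp

lemma recentre_zero {ψ : Equiv.Perm V} (h0 : ψ 0 = 0) : recentre ψ 0 = ψ := by
  ext v
  simp [h0]

def Subgroup.recentred (G : Subgroup (Equiv.Perm V)) : Subgroup (Equiv.Perm V) where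
  carrier := {ψ | ∀ p, recentre ψ p ∈ G}
  one_mem' p := by simp [recentre_one, G.one_mem]
  mul_mem' h₂ h₁ p := by
    rw [recentre_mul]
    exact G.mul_mem (h₂ _) (h₁ p)
  inv_mem' h p := by
    rw [recentre_inv]
    exact G.inv_mem (h _)

end Recentre

lemma IsElemAut.recentre {n : ℕ} {e : Equiv.Perm (Fin n → ℂ)} (he : IsElemAut n e)
    (p : Fin n → ℂ) : IsElemAut n (recentre e p) := by
  obtain ⟨i, h, hsupp, he⟩ := he
  refine ⟨i, bind₁ (fun j => X j + C (p j)) h - C (eval p h), ?_, fun v j => ?_⟩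
  · refine Subalgebra.sub_mem _ (bind₁_mem_supported (fun j hj => ?_) hsupp)
      (Subalgebra.algebraMap_mem _ _)
    exact Subalgebra.add_mem _ (X_mem_supported.2 hj) (Subalgebra.algebraMap_mem _ _)
  · have htrans : eval v (bind₁ (fun j => X j + C (p j)) h) = eval (v + p) h := by
      change eval₂Hom (RingHom.id ℂ) v _ = _
      rw [eval₂Hom_bind₁]
      simp only [coe_eval₂Hom, eval₂_add, eval₂_X, eval₂_C, RingHom.id_apply, eval₂_id]
      rfl
    by_cases hj : j = i
    · simp only [hj, recentre_apply, Pi.sub_apply, he, ↓reduceIte, Pi.add_apply, map_sub,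
        htrans, eval_C]
      ring
    · simp [he, hj]

lemma IsTame.mem_recentred_liftable {n : ℕ} (hn : 2 ≤ n) (c : Fin n)
    {ψ : Equiv.Perm (Fin n → ℂ)} (hψ : IsTame n ψ) : ψ ∈ (liftable n c).recentred := by
  refine (Subgroup.closure_le _).2 ?_ hψ
  rintro e (⟨A, hA, b, he⟩ | he) p
  · exact mem_liftable_of_mulVec hn c hA fun v => by simp [he, mulVec_add]
  · exact mem_liftable_of_isElemAut c (he.recentre p) (by simp)

theorem stmt_3 (n : ℕ) (hn : 2 ≤ n) (ψ : Equiv.Perm (Fin n → ℂ))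
    (htame : IsTame n ψ) (h0 : ψ 0 = 0) :
    ∃ φ : SL n → SL n, SLAlgAut φ ∧
      ∀ X : SL n,
        (fun i : Fin n => (φ X : Matrix (Fin n) (Fin n) ℂ) i ⟨0, by omega⟩) =
          ψ (fun k : Fin n => (X : Matrix (Fin n) (Fin n) ℂ) k ⟨0, by omega⟩) := by
  have := htame.mem_recentred_liftable hn ⟨0, by omega⟩ 0
  rwa [recentre_zero h0] at this
end
end

section
/- Let n ≥ 3 and let A : ℂ → M_{n,(n-1)}(ℂ) be a morphism such that A(t) has rank n−1 for every t ∈ ℂ. Then there exists a vector v ∈ ℂⁿ such that vᵀ · A(t) ≠ 0 for all t ∈ ℂ. -/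
/-!
For `M ∈ M_{m+1,m}` let `B = [x | M]`. From `B · adj B = det B` one reads off that every `v` with
`vᵀ M = 0` satisfies `det B · v = (v·x) · q`, where `q` is the first row of `adj B`, i.e. the
vector of signed maximal minors of `M`. If `rank M = m`, some `x` makes `det B ≠ 0`, so the left
kernel of `M` lies on the line `K · q`. For `A(t)` the vector `q(t)` has polynomial entries, and
it remains to find `v` on none of the lines `ℂ · q(t)`. Take `v = (1, a, b, 0, …, 0)`: if
`v = c · q(t)` then `q₁(t) = a q₀(t)` and `b = q₂(t) / q₀(t)`; choosing `a` with `a q₀ ≠ q₁`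
confines `t` to finitely many roots, and `b` avoids the finitely many resulting values.
-/

open Matrix Polynomial

namespace Matrix

variable {R ι : Type*} {m : ℕ}

def consCol (x : ι → R) (M : Matrix ι (Fin m) R) : Matrix ι (Fin (m + 1)) R :=
  of fun k => vecCons (x k) (M k)

@[simp]
theorem consCol_apply_zero (x : ι → R) (M : Matrix ι (Fin m) R) (k : ι) :
    consCol x M k 0 = x k :=
  rfl

@[simp]
theorem consCol_apply_succ (x : ι → R) (M : Matrix ι (Fin m) R) (k : ι)
    (l : Fin m) : consCol x M k l.succ = M k l :=
  rfl

variable [CommRing R]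

/-- Entry `i` is `(-1)^i` times the minor of `M` obtained by deleting row `i`. -/
def cofactorVec (M : Matrix (Fin (m + 1)) (Fin m) R) : Fin (m + 1) → R :=
  fun i => (consCol (Pi.single i 1) M).det

theorem adjugate_consCol_apply_zero (x : Fin (m + 1) → R) (M : Matrix (Fin (m + 1)) (Fin m) R)
    (i : Fin (m + 1)) : adjugate (consCol x M) 0 i = cofactorVec M i := by
  rw [← transpose_apply (adjugate _), adjugate_transpose, adjugate_def, of_apply, cramer_apply,
    transpose_transpose, cofactorVec]
  congr 1
  ext k l
  refine Fin.cases ?_ (fun l => ?_) l <;> simp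

theorem cofactorVec_map {S : Type*} [CommRing S] (f : R →+* S)
    (M : Matrix (Fin (m + 1)) (Fin m) R) : cofactorVec (M.map f) = f ∘ cofactorVec M := by
  ext i
  simp only [cofactorVec, Function.comp_apply, RingHom.map_det]
  congr 1
  ext k l
  refine Fin.cases ?_ (fun l => ?_) l
  · rcases eq_or_ne k i with rfl | hki <;> simp [*]
  · simp

theorem det_consCol_smul_eq_dotProduct_smul_cofactorVec (x : Fin (m + 1) → R)
    {M : Matrix (Fin (m + 1)) (Fin m) R} {v : Fin (m + 1) → R} (hv : v ᵥ* M = 0) :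
    (consCol x M).det • v = (v ⬝ᵥ x) • cofactorVec M := by
  have hvB : v ᵥ* consCol x M = Pi.single 0 (v ⬝ᵥ x) := by
    ext l
    refine Fin.cases ?_ (fun l => ?_) l
    · simp [vecMul, dotProduct]
    · simpa [vecMul, dotProduct] using congrFun hv l
  calc (consCol x M).det • v = v ᵥ* (consCol x M * adjugate (consCol x M)) := by
        rw [mul_adjugate, vecMul_smul, vecMul_one]
    _ = (v ⬝ᵥ x) • cofactorVec M := by
      rw [← vecMul_vecMul, hvB, single_vecMul]
      congr 1
      ext i
      exact adjugate_consCol_apply_zero x M i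

variable {K : Type*} [Field K]

theorem exists_det_consCol_ne_zero {M : Matrix (Fin (m + 1)) (Fin m) K} (hM : M.rank = m) :
    ∃ x : Fin (m + 1) → K, (consCol x M).det ≠ 0 := by
  have hindep : LinearIndependent K M.col := by
    rw [linearIndependent_iff_card_eq_finrank_span, Fintype.card_fin, Set.finrank,
      ← rank_eq_finrank_span_cols, hM]
  have hspan : Submodule.span K (Set.range M.col) < ⊤ := by
    refine lt_top_iff_ne_top.2 fun h => ?_
    have := congrArg (fun p : Submodule K (Fin (m + 1) → K) => Module.finrank K p) h
    rw [finrank_top, ← rank_eq_finrank_span_cols, hM] at this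
    simp at this
  obtain ⟨x, -, hx⟩ := SetLike.exists_of_lt hspan
  refine ⟨x, ?_⟩
  have hcols : (consCol x M).col = Fin.cons x M.col := by
    ext l k
    refine Fin.cases ?_ (fun l => ?_) l <;> simp
  rw [← isUnit_iff_ne_zero, ← isUnit_iff_isUnit_det, ← linearIndependent_cols_iff_isUnit, hcols]
  exact linearIndependent_finCons.2 ⟨hindep, hx⟩

theorem exists_eq_smul_cofactorVec_of_vecMul_eq_zero {M : Matrix (Fin (m + 1)) (Fin m) K}
    (hM : M.rank = m) {v : Fin (m + 1) → K} (hv : v ᵥ* M = 0) :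
    ∃ c : K, v = c • cofactorVec M := by
  obtain ⟨x, hx⟩ := exists_det_consCol_ne_zero hM
  refine ⟨(v ⬝ᵥ x) / (consCol x M).det, ?_⟩
  rw [div_eq_inv_mul, mul_smul, ← det_consCol_smul_eq_dotProduct_smul_cofactorVec x hv,
    inv_smul_smul₀ hx]

end Matrix

namespace Polynomial

variable {K : Type*} [Field K] [Infinite K]

theorem exists_forall_ne_smul_eval_fin_three (q : Fin 3 → K[X]) :
    ∃ w : Fin 3 → K, ∀ (t c : K), w ≠ c • fun i => (q i).eval t := by
  classical
  by_cases h0 : q 0 = 0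
  · refine ⟨Pi.single 0 1, fun t c h => ?_⟩
    simpa [h0] using congrFun h 0
  obtain ⟨a, ha⟩ : ∃ a : K, C a * q 0 ≠ q 1 := by
    by_contra! h
    exact h0 (by simpa using ((h 0).trans (h 1).symm).symm)
  set p := C a * q 0 - q 1
  obtain ⟨b, hb⟩ := Infinite.exists_notMem_finset
    (p.roots.toFinset.image fun t => (q 2).eval t / (q 0).eval t)
  refine ⟨![1, a, b], fun t c h => hb ?_⟩
  have e0 : 1 = c * (q 0).eval t := by simpa using congrFun h 0
  have e1 : a = c * (q 1).eval t := by simpa using congrFun h 1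
  have e2 : b = c * (q 2).eval t := by simpa using congrFun h 2
  have hc : c = ((q 0).eval t)⁻¹ := eq_inv_of_mul_eq_one_left e0.symm
  have hroot : p.IsRoot t := by
    simp only [p, IsRoot, eval_sub, eval_mul, eval_C, e1]
    linear_combination -(q 1).eval t * e0
  refine Finset.mem_image.2 ⟨t, ?_, ?_⟩
  · exact Multiset.mem_toFinset.2 ((mem_roots (sub_ne_zero.2 ha)).2 hroot)
  · rw [e2, hc, inv_mul_eq_div]

theorem exists_forall_ne_smul_eval {n : ℕ} (hn : 3 ≤ n) (q : Fin n → K[X]) :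
    ∃ v : Fin n → K, ∀ (t c : K), v ≠ c • fun i => (q i).eval t := by
  obtain ⟨w, hw⟩ := exists_forall_ne_smul_eval_fin_three (q ∘ Fin.castLE hn)
  refine ⟨Function.extend (Fin.castLE hn) w 0, fun t c h => hw t c ?_⟩
  funext i
  simpa [(Fin.castLE_injective hn).extend_apply] using congrFun h (Fin.castLE hn i)

end Polynomial

theorem stmt_10 (n : ℕ) (hn : 3 ≤ n) (A : ℂ → Matrix (Fin n) (Fin (n - 1)) ℂ)
    (P : Fin n → Fin (n - 1) → Polynomial ℂ)
    (hP : ∀ (t : ℂ) (i : Fin n) (j : Fin (n - 1)), A t i j = (P i j).eval t)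
    (hrk : ∀ t : ℂ, (A t).rank = n - 1) :
    ∃ v : Fin n → ℂ, ∀ t : ℂ, Matrix.vecMul v (A t) ≠ 0 := by
  obtain ⟨m, rfl⟩ : ∃ m, n = m + 1 := ⟨n - 1, by omega⟩
  have hA : ∀ t, A t = (of P).map (eval t) := fun t => by ext i j; exact hP t i j
  obtain ⟨v, hv⟩ := exists_forall_ne_smul_eval hn (cofactorVec (of P))
  refine ⟨v, fun t hvt => ?_⟩
  obtain ⟨c, hc⟩ := exists_eq_smul_cofactorVec_of_vecMul_eq_zero (hrk t) hvt
  refine hv t c (hc.trans ?_)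
  rw [hA, ← coe_evalRingHom, cofactorVec_map]
  rfl
end

section
/- For any polynomial embedding t ↦ (g₁(t), g₂(t), g₃(t)) of ℂ into ℂ³, there exists a tame algebraic automorphism of ℂ³ such that after composing, the second coordinate polynomial divides g₁g₃ − 1 in ℂ[t]. -/
open Matrix

noncomputable section

/-!
After the affine shear `x ↦ x + l z + m` with generic `l, m`, the first coordinate
`u = g₁ + l g₃ + m` separates the roots of `g₂`, has nonzero derivative at its multiple roots and
vanishes at none of them: injectivity and immersivity of the embedding leave only finitely many
bad values of `l`. The last property makes `u` invertible modulo `g₂`, say `u v ≡ 1`; the first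
two make `Q ↦ Q(u)` surjective onto `ℂ[t] ⧸ (g₂)`, by comparing dimensions. For `Q` with
`Q(u) ≡ v - g₃` the shear `z ↦ z + Q(x)` yields `h₃ = g₃ + Q(u) ≡ v`, so `g₂ ∣ u h₃ - 1`.
-/

open Polynomial

theorem Polynomial.toMvPolynomial_mem_supported {R σ : Type*} [CommSemiring R] {i : σ}
    {s : Set σ} (hi : i ∈ s) (p : R[X]) : p.toMvPolynomial i ∈ MvPolynomial.supported R s :=
  Algebra.adjoin_mono (Set.singleton_subset_iff.mpr (Set.mem_image_of_mem _ hi))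
    (aeval_mem_adjoin_singleton R (MvPolynomial.X i))

def shear {n : ℕ} (i j : Fin n) (hij : j ≠ i) (p : ℂ[X]) : Equiv.Perm (Fin n → ℂ) where
  toFun v := Function.update v i (v i + p.eval (v j))
  invFun v := Function.update v i (v i - p.eval (v j))
  left_inv v := by simp [Function.update_of_ne hij]
  right_inv v := by simp [Function.update_of_ne hij]

theorem isTame_shear {n : ℕ} (i j : Fin n) (hij : j ≠ i) (p : ℂ[X]) :
    IsTame n (shear i j hij p) :=
  Subgroup.subset_closure <| Or.inr ⟨i, p.toMvPolynomial j, p.toMvPolynomial_mem_supported hij,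
    fun v k => by simp [shear, Function.update_apply]⟩

namespace Polynomial

variable {K : Type*} [Field K]

theorem rootMultiplicity_comp_of_derivative_ne_zero {u : K[X]} {τ : K}
    (hu : u.derivative.eval τ ≠ 0) (Q : K[X]) :
    (Q.comp u).rootMultiplicity τ = Q.rootMultiplicity (u.eval τ) := by
  rcases eq_or_ne Q 0 with rfl | hQ
  · simp
  set a := u.eval τ
  obtain ⟨q, hQq, hq⟩ := Q.exists_eq_pow_rootMultiplicity_mul_and_not_dvd hQ a
  set k := Q.rootMultiplicity a
  obtain ⟨w, hw⟩ : X - C τ ∣ u - C a := dvd_iff_isRoot.mpr (by simp [a])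
  have hwτ : w.eval τ = u.derivative.eval τ := by
    simpa [derivative_mul] using congrArg (fun p => p.derivative.eval τ) hw.symm
  have hrest : ¬(w ^ k * q.comp u).IsRoot τ := by
    rw [dvd_iff_isRoot] at hq
    simpa [eval_comp, hwτ, hu] using hq
  have hcomp : Q.comp u = (w ^ k * q.comp u) * (X - C τ) ^ k := by
    conv_lhs => rw [hQq]
    rw [mul_comp, pow_comp, sub_comp, X_comp, C_comp, hw, mul_pow]
    ring
  rw [hcomp, rootMultiplicity_mul_X_sub_C_pow (fun h => hrest (by simp [h])),
    rootMultiplicity_eq_zero hrest, zero_add]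

theorem rootMultiplicity_le_rootMultiplicity_eval_of_dvd_comp {g u Q : K[X]} {τ : K}
    (hQ : Q ≠ 0) (hder : 1 < g.rootMultiplicity τ → u.derivative.eval τ ≠ 0)
    (h : g ∣ Q.comp u) : g.rootMultiplicity τ ≤ Q.rootMultiplicity (u.eval τ) := by
  rcases lt_or_ge 1 (g.rootMultiplicity τ) with hm | hm
  · have hu := hder hm
    have hQu : Q.comp u ≠ 0 := by
      rw [Ne, comp_eq_zero_iff, not_or, not_and_or]
      refine ⟨hQ, Or.inr fun hC => hu ?_⟩
      rw [hC, derivative_C, eval_zero]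
    rw [← rootMultiplicity_comp_of_derivative_ne_zero hu, le_rootMultiplicity_iff hQu]
    exact (pow_rootMultiplicity_dvd g τ).trans h
  · obtain h0 | hpos := (g.rootMultiplicity τ).eq_zero_or_pos
    · simp [h0]
    have hτ : g.IsRoot τ := (rootMultiplicity_pos'.mp hpos).2
    have hQτ : Q.IsRoot (u.eval τ) := by
      simpa [IsRoot, eval_comp] using eval_eq_zero_of_dvd_of_eval_eq_zero h hτ
    have := (rootMultiplicity_pos hQ).mpr hQτ
    omega

theorem prod_X_sub_C_map_eval_roots_dvd_of_dvd_comp {g u Q : K[X]}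
    (hinj : {τ | g.IsRoot τ}.InjOn u.eval)
    (hder : ∀ τ, 1 < g.rootMultiplicity τ → u.derivative.eval τ ≠ 0) (h : g ∣ Q.comp u) :
    ((g.roots.map u.eval).map fun a => X - C a).prod ∣ Q := by
  classical
  rcases eq_or_ne Q 0 with rfl | hQ
  · exact dvd_zero _
  rw [Multiset.prod_X_sub_C_dvd_iff_le_roots hQ, Multiset.le_iff_count]
  intro a
  by_cases ha : a ∈ g.roots.map u.eval
  · obtain ⟨τ, hτ, rfl⟩ := Multiset.mem_map.mp ha
    rw [Multiset.count_map_eq_count _ _ (hinj.mono fun σ hσ => (mem_roots'.mp hσ).2) _ hτ,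
      count_roots, count_roots]
    exact rootMultiplicity_le_rootMultiplicity_eval_of_dvd_comp hQ (hder τ) h
  · simp [Multiset.count_eq_zero.mpr ha]

variable [IsAlgClosed K]

theorem dvd_prod_X_sub_C_map_eval_roots_comp {g : K[X]} (hg : g ≠ 0) (u : K[X]) :
    g ∣ (((g.roots.map u.eval).map fun a => X - C a).prod).comp u := by
  have hg_dvd : g ∣ (g.roots.map fun τ => X - C τ).prod := by
    refine (isUnit_C.mpr (leadingCoeff_ne_zero.mpr hg).isUnit).dvd_mul_left.mp ?_
    rw [C_leadingCoeff_mul_prod_multiset_X_sub_C IsAlgClosed.card_roots_eq_natDegree]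
  refine hg_dvd.trans ?_
  rw [multiset_prod_comp, Multiset.map_map, Multiset.map_map]
  exact Multiset.prod_dvd_prod_of_dvd _ _ fun τ _ => by simp [dvd_iff_isRoot]

/-- The kernel of `Q ↦ Q ∘ u mod g` is generated by `P = ∏ (X - u(τ))` over the roots `τ` of `g`
counted with multiplicity, and `deg P = deg g`. -/
theorem exists_comp_dvd_sub {g u : K[X]} (hg : g ≠ 0) (hinj : {τ | g.IsRoot τ}.InjOn u.eval)
    (hder : ∀ τ, 1 < g.rootMultiplicity τ → u.derivative.eval τ ≠ 0) (w : K[X]) :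
    ∃ Q : K[X], g ∣ Q.comp u - w := by
  set P := ((g.roots.map u.eval).map fun a => X - C a).prod
  have hP : P ≠ 0 := (monic_multiset_prod_of_monic _ _ fun a _ => monic_X_sub_C a).ne_zero
  have hPdeg : P.natDegree = g.natDegree := by
    rw [natDegree_multiset_prod_X_sub_C_eq_card, Multiset.card_map,
      IsAlgClosed.card_roots_eq_natDegree]
  have hmk : ∀ Q : K[X], AdjoinRoot.mk g (Q.comp u) = aeval (AdjoinRoot.mk g u) Q := fun Q => by
    rw [comp_eq_aeval, ← AdjoinRoot.coe_mkₐ, aeval_algHom_apply]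
  let φ : AdjoinRoot P →ₐ[K] AdjoinRoot g :=
    AdjoinRoot.liftAlgHom P (Algebra.ofId K _) (AdjoinRoot.mk g u) <| by
      change aeval _ P = 0
      rw [← hmk, AdjoinRoot.mk_eq_zero]
      exact dvd_prod_X_sub_C_map_eval_roots_comp hg u
  have hφ : ∀ Q, φ (AdjoinRoot.mk P Q) = AdjoinRoot.mk g (Q.comp u) := fun Q => (hmk Q).symm
  have hφ_inj : Function.Injective φ := by
    rw [injective_iff_map_eq_zero]
    intro x hx
    obtain ⟨Q, rfl⟩ := AdjoinRoot.mk_surjective x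
    rw [hφ, AdjoinRoot.mk_eq_zero] at hx
    exact AdjoinRoot.mk_eq_zero.mpr (prod_X_sub_C_map_eval_roots_dvd_of_dvd_comp hinj hder hx)
  have := (AdjoinRoot.powerBasis hP).finite
  have := (AdjoinRoot.powerBasis hg).finite
  have hφ_surj : Function.Surjective φ :=
    (LinearMap.injective_iff_surjective_of_finrank_eq_finrank (f := φ.toLinearMap) (by
      rw [(AdjoinRoot.powerBasis hP).finrank, (AdjoinRoot.powerBasis hg).finrank]
      exact hPdeg)).mp hφ_inj
  obtain ⟨x, hx⟩ := hφ_surj (AdjoinRoot.mk g w)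
  obtain ⟨Q, rfl⟩ := AdjoinRoot.mk_surjective x
  refine ⟨Q, AdjoinRoot.mk_eq_zero.mp ?_⟩
  rw [map_sub, ← hφ, hx, sub_self]

theorem exists_mul_dvd_sub_one {g u : K[X]} (hu : ∀ τ, g.IsRoot τ → u.eval τ ≠ 0) :
    ∃ v, g ∣ u * v - 1 := by
  obtain ⟨a, b, hab⟩ := (isCoprime_iff_aeval_ne_zero_of_isAlgClosed K K u g).mpr fun τ => by
    by_cases hτ : g.IsRoot τ
    · exact Or.inl (by simpa using hu τ hτ)
    · exact Or.inr (by simpa using hτ)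
  exact ⟨a, -b, by linear_combination hab⟩

end Polynomial

section GenericChoice

variable {α K : Type*} [Field K] {S : Set α} {a b : α → K}

theorem Set.Finite.setOf_not_injOn_add_mul (hS : S.Finite) (hab : S.InjOn fun x => (a x, b x)) :
    {l : K | ¬S.InjOn fun x => a x + l * b x}.Finite := by
  refine ((hS.prod hS).image fun p => (a p.2 - a p.1) / (b p.1 - b p.2)).subset ?_
  intro l hl
  simp only [Set.InjOn, not_forall, Set.mem_ofPred_eq] at hl
  obtain ⟨x, hx, y, hy, heq, hne⟩ := hl
  have hb : b x ≠ b y := fun hb =>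
    hne (hab hx hy (Prod.ext (by linear_combination heq - l * hb) hb))
  refine ⟨(x, y), ⟨hx, hy⟩, ?_⟩
  rw [div_eq_iff (sub_ne_zero.mpr hb)]
  linear_combination -heq

theorem Set.Finite.setOf_exists_add_mul_eq_zero (hS : S.Finite)
    (hab : ∀ x ∈ S, a x ≠ 0 ∨ b x ≠ 0) : {l : K | ∃ x ∈ S, a x + l * b x = 0}.Finite := by
  refine (hS.image fun x => -a x / b x).subset ?_
  rintro l ⟨x, hx, hl⟩
  have hb : b x ≠ 0 := fun hb => (hab x hx).elim (fun ha => ha (by simpa [hb] using hl)) (· hb)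
  exact ⟨x, hx, by rw [div_eq_iff hb]; linear_combination -hl⟩

end GenericChoice

theorem Polynomial.exists_add_C_mul_add_C_adapted {K : Type*} [Field K] [Infinite K]
    {g₁ g₂ g₃ : K[X]} (hg₂ : g₂ ≠ 0)
    (hinj : {τ | g₂.IsRoot τ}.InjOn fun τ => (g₁.eval τ, g₃.eval τ))
    (himm : ∀ τ ∈ {τ | 1 < g₂.rootMultiplicity τ},
      g₁.derivative.eval τ ≠ 0 ∨ g₃.derivative.eval τ ≠ 0) :
    ∃ l m : K, {τ | g₂.IsRoot τ}.InjOn (g₁ + C l * g₃ + C m).eval ∧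
      (∀ τ, 1 < g₂.rootMultiplicity τ → (g₁ + C l * g₃ + C m).derivative.eval τ ≠ 0) ∧
      ∀ τ, g₂.IsRoot τ → (g₁ + C l * g₃ + C m).eval τ ≠ 0 := by
  have hR : {τ | g₂.IsRoot τ}.Finite := finite_setOfPred_isRoot hg₂
  have hR' : {τ | 1 < g₂.rootMultiplicity τ}.Finite :=
    hR.subset fun τ hτ => (rootMultiplicity_pos hg₂).mp (zero_lt_one.trans hτ)
  obtain ⟨l, hl⟩ := ((hR.setOf_not_injOn_add_mul hinj).union
    (hR'.setOf_exists_add_mul_eq_zero himm)).infinite_compl.nonempty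
  obtain ⟨m, hm⟩ := (hR.image fun τ => -(g₁.eval τ + l * g₃.eval τ)).infinite_compl.nonempty
  simp only [Set.mem_compl_iff, Set.mem_union, Set.mem_ofPred_eq, not_or, not_not,
    not_exists, not_and] at hl
  refine ⟨l, m, fun x hx y hy h => hl.1 hx hy (by simpa using h), fun τ hτ => ?_,
    fun τ hτ h => hm ⟨τ, hτ, ?_⟩⟩
  · simpa using hl.2 τ hτ
  · simp only [eval_add, eval_mul, eval_C] at h
    linear_combination -h

theorem stmt_12_general (g₁ g₂ g₃ : Polynomial ℂ)
    (hinj : Function.Injective fun t : ℂ => ![g₁.eval t, g₂.eval t, g₃.eval t])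
    (himm : ∀ t : ℂ, ¬(g₁.derivative.eval t = 0 ∧ g₂.derivative.eval t = 0 ∧
      g₃.derivative.eval t = 0)) :
    ∃ ψ : Equiv.Perm (Fin 3 → ℂ), IsTame 3 ψ ∧
      ∃ h₁ h₂ h₃ : Polynomial ℂ,
        (∀ t : ℂ, ψ ![g₁.eval t, g₂.eval t, g₃.eval t] =
          ![h₁.eval t, h₂.eval t, h₃.eval t]) ∧
        h₂ ∣ h₁ * h₃ - 1 := by
  rcases eq_or_ne g₂ 0 with rfl | hg₂
  · refine ⟨shear 1 0 (by decide) (C 1), isTame_shear _ _ _ _, g₁, 1, g₃, fun t => ?_,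
      one_dvd _⟩
    ext i; fin_cases i <;> simp [shear]
  have hinj_roots : {τ | g₂.IsRoot τ}.InjOn fun τ => (g₁.eval τ, g₃.eval τ) :=
    fun τ hτ σ hσ h => hinj (by ext i; fin_cases i <;> simp_all [Prod.ext_iff])
  have himm_roots : ∀ τ ∈ {τ | 1 < g₂.rootMultiplicity τ},
      g₁.derivative.eval τ ≠ 0 ∨ g₃.derivative.eval τ ≠ 0 := fun τ hτ => by
    by_contra! h
    exact himm τ ⟨h.1, ((one_lt_rootMultiplicity_iff_isRoot hg₂).mp hτ).2, h.2⟩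
  obtain ⟨l, m, hsep, hder, hunit⟩ := exists_add_C_mul_add_C_adapted hg₂ hinj_roots himm_roots
  set u := g₁ + C l * g₃ + C m
  obtain ⟨v, hv⟩ := exists_mul_dvd_sub_one hunit
  obtain ⟨Q, hQ⟩ := exists_comp_dvd_sub hg₂ hsep hder (v - g₃)
  refine ⟨shear 2 0 (by decide) Q * shear 0 2 (by decide) (C l * X + C m),
    Subgroup.mul_mem _ (isTame_shear _ _ _ _) (isTame_shear _ _ _ _), u, g₂, g₃ + Q.comp u,
    fun t => ?_, ?_⟩
  · ext i; fin_cases i <;> simp [shear, u, eval_comp, add_assoc]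
  · rw [show u * (g₃ + Q.comp u) - 1 = u * (Q.comp u - (v - g₃)) + (u * v - 1) by ring]
    exact dvd_add (hQ.mul_left u) hv

theorem stmt_12 (g₁ g₂ g₃ : Polynomial ℂ)
    (hinj : Function.Injective fun t : ℂ => ![g₁.eval t, g₂.eval t, g₃.eval t])
    (hproper : IsProperMap fun t : ℂ => ![g₁.eval t, g₂.eval t, g₃.eval t])
    (himm : ∀ t : ℂ, ¬(g₁.derivative.eval t = 0 ∧ g₂.derivative.eval t = 0 ∧
      g₃.derivative.eval t = 0)) :
    ∃ ψ : Equiv.Perm (Fin 3 → ℂ), IsTame 3 ψ ∧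
      ∃ h₁ h₂ h₃ : Polynomial ℂ,
        (∀ t : ℂ, ψ ![g₁.eval t, g₂.eval t, g₃.eval t] =
          ![h₁.eval t, h₂.eval t, h₃.eval t]) ∧
        h₂ ∣ h₁ * h₃ - 1 :=
  stmt_12_general g₁ g₂ g₃ hinj himm
end
end

section
/- Let f : ℂ → SL_n(ℂ) (n ≥ 3) be an algebraic embedding and suppose: (i) t ↦ (f_{ij}(t))_{1≤i≤n, 2≤j≤n} (the last n−1 columns) is an algebraic embedding into M_{n,(n-1)}(ℂ); (ii) the row vector (f_{n2}(t),...,f_{nn}(t)) is nonzero for all t ∈ ℂ. Then there exist polynomials p̃₂,...,p̃ₙ ∈ ℂ[t] with Σ_{k=2}^{n} f_{nk}(t)·p̃ₖ(t) = t − f_{n1}(t), and consequently an algebraic automorphism φ of SL_n(ℂ) (right multiplication by a lower-triangular unipotent matrix with polynomial entries in the last n−1 columns) such that the (n,1)-entry of φ(f(t)) equals t for all t. -/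
open Matrix

noncomputable section

/-! The entries of the last row after the first have no common zero, so they generate the unit
ideal of `ℂ[t]`; this gives the `p̃ₖ`.

The entries of the last `n - 1` columns are the coordinates of an injective immersion of `ℂ`,
so the subalgebra `A ⊆ ℂ[t]` they generate separates points and tangents. Such an `A` admits
Hermite interpolation: `ℂ[t] = A + g ℂ[t]` for every `g ≠ 0`. As `ℂ[t]` is finite over `A`,
Nakayama's lemma applied to `ℂ[t] / A` gives `g ≠ 0` with `g ℂ[t] ⊆ A`, hence `A = ℂ[t]`.
So `p̃ₖ = Gₖ(f(t))` for polynomials `Gₖ` in the entries of the last `n - 1` columns, and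
`φ(X) = X (1 + ∑ₖ Gₖ(X) E_{k,1})` adds `∑ₖ Gₖ(X) · (column k)` to the first column of `X`.
It does not change the last `n - 1` columns, hence not the `Gₖ(X)` either, so
`X ↦ X (1 - ∑ₖ Gₖ(X) E_{k,1})` is its inverse. -/

namespace Polynomial

variable {K : Type*} [Field K]

theorem exists_mem_eq_X_sub_C_mul_eval_ne_zero (A : Subalgebra K K[X])
    (hsep : ∀ x y : K, x ≠ y → ∃ a ∈ A, a.eval x ≠ a.eval y)
    (htan : ∀ x : K, ∃ a ∈ A, a.derivative.eval x ≠ 0) (y x : K) :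
    ∃ z ∈ A, ∃ u : K[X], z = (X - C y) * u ∧ u.eval x ≠ 0 := by
  obtain ⟨a, ha, h⟩ : ∃ a ∈ A, a.eval y ≠ a.eval x ∨ y = x ∧ a.derivative.eval x ≠ 0 := by
    by_cases hyx : y = x
    · obtain ⟨a, ha, h⟩ := htan x
      exact ⟨a, ha, .inr ⟨hyx, h⟩⟩
    · obtain ⟨a, ha, h⟩ := hsep y x hyx
      exact ⟨a, ha, .inl h⟩
  set z := a - C (a.eval y)
  have hz : (X - C y) * (z /ₘ (X - C y)) = z := mul_divByMonic_eq_iff_isRoot.mpr (by simp [z])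
  refine ⟨z, A.sub_mem ha (A.algebraMap_mem _), _, hz.symm, fun hu => ?_⟩
  rcases h with h | ⟨rfl, h⟩
  · apply h
    have := congrArg (eval x) hz
    simp only [eval_mul, hu, mul_zero, eval_sub, eval_C, z] at this
    exact (sub_eq_zero.mp this.symm).symm
  · apply h
    have := congrArg (fun q => (derivative q).eval y) hz
    simp only [derivative_mul, derivative_sub, derivative_X, derivative_C, eval_add,
      eval_mul, hu, eval_sub, eval_X, eval_C, z] at this
    simpa using this.symm

theorem exists_mem_eq_prod_mul_eval_ne_zero (A : Subalgebra K K[X])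
    (hsep : ∀ x y : K, x ≠ y → ∃ a ∈ A, a.eval x ≠ a.eval y)
    (htan : ∀ x : K, ∃ a ∈ A, a.derivative.eval x ≠ 0) (s : Multiset K) (x : K) :
    ∃ w ∈ A, ∃ u : K[X], w = (s.map fun y => X - C y).prod * u ∧ u.eval x ≠ 0 := by
  induction s using Multiset.induction_on with
  | empty => exact ⟨1, A.one_mem, 1, by simp, by simp⟩
  | cons y s ih =>
    obtain ⟨w, hw, u, rfl, hu⟩ := ih
    obtain ⟨z, hz, u', rfl, hu'⟩ := exists_mem_eq_X_sub_C_mul_eval_ne_zero A hsep htan y x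
    refine ⟨_ * _, A.mul_mem hz hw, u' * u, ?_, by simp [hu, hu']⟩
    rw [Multiset.map_cons, Multiset.prod_cons]
    ring

theorem exists_mem_prod_dvd_sub (A : Subalgebra K K[X])
    (hsep : ∀ x y : K, x ≠ y → ∃ a ∈ A, a.eval x ≠ a.eval y)
    (htan : ∀ x : K, ∃ a ∈ A, a.derivative.eval x ≠ 0) (s : Multiset K) (b : K[X]) :
    ∃ a ∈ A, (s.map fun y => X - C y).prod ∣ b - a := by
  induction s using Multiset.induction_on with
  | empty => exact ⟨0, A.zero_mem, by simp⟩
  | cons x s ih =>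
    obtain ⟨a, ha, h, hh⟩ := ih
    obtain ⟨w, hw, u, rfl, hu⟩ := exists_mem_eq_prod_mul_eval_ne_zero A hsep htan s x
    set g := (s.map fun y => X - C y).prod
    -- correct `a` by a multiple of `w` so that the cofactor `h` acquires a root at `x`
    have hroot : (h - C (h.eval x / u.eval x) * u).IsRoot x := by
      simp [div_mul_cancel₀ _ hu]
    refine ⟨a + C (h.eval x / u.eval x) * (g * u),
      A.add_mem ha (A.mul_mem (A.algebraMap_mem _) hw), ?_⟩
    obtain ⟨q, hq⟩ := dvd_iff_isRoot.mpr hroot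
    refine ⟨q, ?_⟩
    rw [Multiset.map_cons, Multiset.prod_cons, mul_comm (X - C x), mul_assoc, ← hq]
    linear_combination hh

theorem exists_mem_dvd_sub [IsAlgClosed K] (A : Subalgebra K K[X])
    (hsep : ∀ x y : K, x ≠ y → ∃ a ∈ A, a.eval x ≠ a.eval y)
    (htan : ∀ x : K, ∃ a ∈ A, a.derivative.eval x ≠ 0) {g : K[X]} (hg : g ≠ 0) (b : K[X]) :
    ∃ a ∈ A, g ∣ b - a := by
  obtain ⟨a, ha, h⟩ := exists_mem_prod_dvd_sub A hsep htan g.roots b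
  refine ⟨a, ha, ?_⟩
  rwa [(IsAlgClosed.splits g).eq_prod_roots, C_mul_dvd (leadingCoeff_ne_zero.mpr hg)]

theorem adjoin_X_eq_top_of_subalgebra (A : Subalgebra K K[X]) :
    Algebra.adjoin A {(X : K[X])} = ⊤ := by
  refine eq_top_iff.mpr fun b _ => ?_
  have hle : Algebra.adjoin K {(X : K[X])} ≤ (Algebra.adjoin A {(X : K[X])}).restrictScalars K :=
    Algebra.adjoin_le (by simp [Algebra.subset_adjoin])
  exact hle (by rw [adjoin_X]; trivial)

theorem finite_of_mem_of_natDegree_ne_zero (A : Subalgebra K K[X]) {q : K[X]} (hq : q ∈ A)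
    (hdeg : q.natDegree ≠ 0) : Module.Finite A K[X] := by
  have hq0 : q ≠ 0 := by rintro rfl; simp at hdeg
  set q' := C q.leadingCoeff⁻¹ * q
  have hq'A : q' ∈ A := A.mul_mem (A.algebraMap_mem _) hq
  have hmonic : q'.Monic := monic_C_mul_of_mul_leadingCoeff_eq_one
    (inv_mul_cancel₀ (leadingCoeff_ne_zero.mpr hq0))
  have hdeg' : q'.natDegree ≠ 0 := by
    rwa [natDegree_C_mul (inv_ne_zero (leadingCoeff_ne_zero.mpr hq0))]
  have hX : IsIntegral A (X : K[X]) := by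
    refine IsIntegral.of_aeval_monic (hmonic.map (algebraMap K A))
      (by rwa [hmonic.natDegree_map]) ?_
    rw [aeval_map_algebraMap, aeval_X_left_apply]
    exact isIntegral_algebraMap (x := (⟨q', hq'A⟩ : A))
  refine Module.finite_def.mpr ?_
  simpa [adjoin_X_eq_top_of_subalgebra A] using hX.fg_adjoin_singleton

theorem exists_ne_zero_forall_mul_mem [IsAlgClosed K] (A : Subalgebra K K[X])
    (hsep : ∀ x y : K, x ≠ y → ∃ a ∈ A, a.eval x ≠ a.eval y)
    (htan : ∀ x : K, ∃ a ∈ A, a.derivative.eval x ≠ 0) :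
    ∃ g : K[X], g ≠ 0 ∧ ∀ b : K[X], g * b ∈ A := by
  obtain ⟨q, hqA, hq⟩ := htan 0
  have hdeg : q.natDegree ≠ 0 := fun h => hq (by rw [eq_C_of_natDegree_eq_zero h]; simp)
  have := finite_of_mem_of_natDegree_ne_zero A hqA hdeg
  set I : Ideal A := Ideal.span {⟨q, hqA⟩}
  have hA : ∀ b : K[X], b ∈ (1 : Submodule A K[X]) ↔ b ∈ A := fun b =>
    Submodule.mem_one.trans ⟨by rintro ⟨a, rfl⟩; exact a.2, fun hb => ⟨⟨b, hb⟩, rfl⟩⟩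
  -- Interpolation gives `K[X] = A + q K[X]`, so Nakayama applies to `K[X] / A`.
  have hle : (⊤ : Submodule A (K[X] ⧸ (1 : Submodule A K[X]))) ≤ I • ⊤ := by
    rintro z -
    obtain ⟨b, rfl⟩ := Submodule.Quotient.mk_surjective _ z
    obtain ⟨a, ha, b', hb'⟩ :=
      exists_mem_dvd_sub A hsep htan (g := q) (by rintro rfl; simp at hdeg) b
    have hb : b = (⟨q, hqA⟩ : A) • b' + a := by
      rw [Algebra.smul_def]; exact (sub_eq_iff_eq_add.mp hb')
    rw [hb, Submodule.Quotient.mk_add, (Submodule.Quotient.mk_eq_zero _).mpr ((hA a).mpr ha),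
      add_zero, Submodule.Quotient.mk_smul]
    exact Submodule.smul_mem_smul (Ideal.mem_span_singleton_self _) trivial
  obtain ⟨r, hr1, hr⟩ := Submodule.exists_sub_one_mem_and_smul_eq_zero_of_fg_of_le_smul I ⊤
    (Module.finite_def.mp inferInstance) hle
  refine ⟨r, fun hr0 => hdeg ?_, fun b => ?_⟩
  · obtain ⟨s, hs⟩ := Ideal.mem_span_singleton'.mp hr1
    have : (s : K[X]) * q = r - 1 := congrArg Subtype.val hs
    rw [hr0, zero_sub] at this
    exact natDegree_eq_zero_of_isUnit (IsUnit.of_mul_eq_one_right (-(s : K[X]))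
      (by linear_combination -this))
  · have := hr (Submodule.Quotient.mk b) trivial
    rwa [← Submodule.Quotient.mk_smul, Submodule.Quotient.mk_eq_zero, hA, Algebra.smul_def] at this

theorem subalgebra_eq_top_of_separates [IsAlgClosed K] (A : Subalgebra K K[X])
    (hsep : ∀ x y : K, x ≠ y → ∃ a ∈ A, a.eval x ≠ a.eval y)
    (htan : ∀ x : K, ∃ a ∈ A, a.derivative.eval x ≠ 0) : A = ⊤ := by
  obtain ⟨g, hg, hgA⟩ := exists_ne_zero_forall_mul_mem A hsep htan
  refine eq_top_iff.mpr fun b _ => ?_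
  obtain ⟨a, ha, w, hw⟩ := exists_mem_dvd_sub A hsep htan hg b
  rw [← sub_add_cancel b a, hw]
  exact A.add_mem (hgA w) ha

theorem adjoin_range_eq_top_of_injective [IsAlgClosed K] {σ : Type*} (F : σ → K[X])
    (hinj : Function.Injective fun t s => (F s).eval t)
    (himm : ∀ t, ∃ s, (F s).derivative.eval t ≠ 0) :
    Algebra.adjoin K (Set.range F) = ⊤ := by
  refine subalgebra_eq_top_of_separates _ (fun x y hxy => ?_) (fun t => ?_)
  · obtain ⟨s, hs⟩ := Function.ne_iff.mp (hinj.ne hxy)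
    exact ⟨F s, Algebra.subset_adjoin ⟨s, rfl⟩, hs⟩
  · obtain ⟨s, hs⟩ := himm t
    exact ⟨F s, Algebra.subset_adjoin ⟨s, rfl⟩, hs⟩

theorem span_range_eq_top_of_forall_exists_eval_ne_zero [IsAlgClosed K] {ι : Type*}
    (Q : ι → K[X]) (hQ : ∀ t, ∃ i, (Q i).eval t ≠ 0) : Ideal.span (Set.range Q) = ⊤ := by
  obtain ⟨h, hh⟩ := (IsPrincipalIdealRing.principal (Ideal.span (Set.range Q))).principal
  rw [Ideal.submodule_span_eq] at hh
  rw [hh, Ideal.span_singleton_eq_top, isUnit_iff_degree_eq_zero]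
  by_contra hdeg
  obtain ⟨t, ht⟩ := IsAlgClosed.exists_root h hdeg
  obtain ⟨i, hi⟩ := hQ t
  have hdvd : h ∣ Q i := Ideal.mem_span_singleton.mp (hh ▸ Ideal.subset_span ⟨i, rfl⟩)
  exact hi (eval_eq_zero_of_dvd_of_eval_eq_zero hdvd ht)

end Polynomial

namespace Matrix

variable {ι κ R : Type*} [CommRing R]

def evalCols (e : κ → ι) (H : κ → MvPolynomial (ι × κ) R) (X : Matrix ι ι R) : κ → R :=
  fun k => MvPolynomial.eval (fun s => X s.1 (e s.2)) (H k)

theorem evalCols_neg (e : κ → ι) (H : κ → MvPolynomial (ι × κ) R) (X : Matrix ι ι R) :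
    evalCols e (-H) X = -evalCols e H X := by
  ext k
  simp [evalCols]

variable [DecidableEq ι] [Fintype κ]

def colShear (e : κ → ι) (c : ι) (v : κ → R) : Matrix ι ι R :=
  1 + ∑ k, single (e k) c (v k)

theorem mul_colShear_apply [Fintype ι] (e : κ → ι) (c : ι) (v : κ → R) (Y : Matrix ι ι R)
    (i j : ι) :
    (Y * colShear e c v) i j = Y i j + if j = c then ∑ k, Y i (e k) * v k else 0 := by
  rw [colShear, mul_add, mul_one, add_apply, Finset.mul_sum, sum_apply]
  split_ifs with hj
  · subst hj
    simp only [mul_single_apply_same]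
  · simp only [mul_single_apply_of_ne _ _ _ _ _ hj, Finset.sum_const_zero]

variable {e : κ → ι} {c : ι}

theorem colShear_mul_colShear [Fintype ι] (he : ∀ k, e k ≠ c) (v w : κ → R) :
    colShear e c v * colShear e c w = colShear e c (v + w) := by
  have hN : (∑ k, single (e k) c (v k)) * ∑ k, single (e k) c (w k) = 0 := by
    simp only [Finset.sum_mul, Finset.mul_sum]
    exact Finset.sum_eq_zero fun k _ => Finset.sum_eq_zero fun l _ => by simp [(he k).symm]
  simp only [colShear, add_mul, mul_add, one_mul, mul_one, hN, add_zero, Pi.add_apply,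
    single_add, Finset.sum_add_distrib, add_assoc]

theorem colShear_zero : colShear e c (0 : κ → R) = 1 := by
  simp [colShear]

theorem det_colShear [Fintype ι] (he : ∀ k, e k ≠ c) (v : κ → R) :
    (colShear e c v).det = 1 := by
  have : ∑ k, single (e k) c (v k) = replicateCol Unit (∑ k, Pi.single (e k) (v k)) *
      replicateRow Unit (Pi.single c (1 : R)) := by
    ext i j
    by_cases hj : c = j <;> simp [sum_apply, single_apply, Pi.single_apply, mul_apply, hj, eq_comm]
  rw [colShear, this, det_one_add_replicateCol_mul_replicateRow]
  simp [he]

theorem evalCols_mul_colShear [Fintype ι] (he : ∀ k, e k ≠ c) (H : κ → MvPolynomial (ι × κ) R)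
    (X : Matrix ι ι R) (v : κ → R) : evalCols e H (X * colShear e c v) = evalCols e H X := by
  ext k
  simp only [evalCols, mul_colShear_apply, he, if_false, add_zero]

namespace SpecialLinearGroup

variable [Fintype ι]

def mulColShear (he : ∀ k, e k ≠ c) (H : κ → MvPolynomial (ι × κ) R)
    (X : SpecialLinearGroup ι R) : SpecialLinearGroup ι R :=
  ⟨X * colShear e c (evalCols e H X), by rw [det_mul, X.2, det_colShear he, one_mul]⟩

theorem leftInverse_mulColShear_neg (he : ∀ k, e k ≠ c) (H : κ → MvPolynomial (ι × κ) R) :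
    Function.LeftInverse (mulColShear he (-H)) (mulColShear he H) := fun X => by
  ext : 1
  simp only [mulColShear, evalCols_mul_colShear he, evalCols_neg e, mul_assoc,
    colShear_mul_colShear he, add_neg_cancel, colShear_zero, mul_one]

end SpecialLinearGroup

end Matrix

theorem slRegular_mulColShear {n : ℕ} {κ : Type*} [Fintype κ] {e : κ → Fin n} {c : Fin n}
    (he : ∀ k, e k ≠ c) (H : κ → MvPolynomial (Fin n × κ) ℂ) :
    SLRegular (SpecialLinearGroup.mulColShear he H) := by
  intro i j
  refine ⟨MvPolynomial.X (i, j) + if j = c then ∑ k, MvPolynomial.X (i, e k) *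
    MvPolynomial.rename (fun s => (s.1, e s.2)) (H k) else 0, fun X => ?_⟩
  simp only [SpecialLinearGroup.mulColShear, mul_colShear_apply, evalCols]
  split_ifs <;> simp [MvPolynomial.eval_rename, Function.comp_def]

theorem slAlgAut_mulColShear {n : ℕ} {κ : Type*} [Fintype κ] {e : κ → Fin n} {c : Fin n}
    (he : ∀ k, e k ≠ c) (H : κ → MvPolynomial (Fin n × κ) ℂ) :
    SLAlgAut (SpecialLinearGroup.mulColShear he H) :=
  ⟨slRegular_mulColShear he H, _, slRegular_mulColShear he (-H),
    SpecialLinearGroup.leftInverse_mulColShear_neg he H,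
    by simpa [Function.RightInverse] using
      SpecialLinearGroup.leftInverse_mulColShear_neg he (-H)⟩

theorem stmt_18 (n : ℕ) (hn : 3 ≤ n) (f : ℂ → SL n)
    (P : Fin n → Fin n → Polynomial ℂ)
    (hP : ∀ (t : ℂ) (i j : Fin n), (f t : Matrix (Fin n) (Fin n) ℂ) i j = (P i j).eval t)
    -- (i) the projection of `f` onto the last `n-1` columns is an algebraic embedding
    (hinj' : Function.Injective (fun t : ℂ =>
      Matrix.of (fun (i : Fin n) (j : Fin (n - 1)) =>
        (f t : Matrix (Fin n) (Fin n) ℂ) i ⟨(j : ℕ) + 1, by omega⟩)))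
    (himm' : ∀ t : ℂ, Matrix.of (fun (i : Fin n) (j : Fin (n - 1)) =>
      (P i ⟨(j : ℕ) + 1, by omega⟩).derivative.eval t) ≠ 0)
    -- (ii) the last row, without its first entry, is nowhere zero
    (hrow : ∀ t : ℂ, ∃ j : Fin (n - 1),
      (f t : Matrix (Fin n) (Fin n) ℂ) ⟨n - 1, by omega⟩ ⟨(j : ℕ) + 1, by omega⟩ ≠ 0) :
    -- the Bézout-type identity
    (∃ p : Fin (n - 1) → Polynomial ℂ, ∀ t : ℂ,
      (∑ j : Fin (n - 1),
        (f t : Matrix (Fin n) (Fin n) ℂ) ⟨n - 1, by omega⟩ ⟨(j : ℕ) + 1, by omega⟩ *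
          (p j).eval t) =
        t - (f t : Matrix (Fin n) (Fin n) ℂ) ⟨n - 1, by omega⟩ ⟨0, by omega⟩) ∧
    -- the resulting algebraic automorphism making the `(n,1)`-entry equal to `t`
    ∃ φ : SL n → SL n, SLAlgAut φ ∧
      ∀ t : ℂ, (φ (f t) : Matrix (Fin n) (Fin n) ℂ) ⟨n - 1, by omega⟩ ⟨0, by omega⟩ = t := by
  set r : Fin n := ⟨n - 1, by omega⟩
  set c : Fin n := ⟨0, by omega⟩
  set e : Fin (n - 1) → Fin n := fun j => ⟨j + 1, by omega⟩
  have he : ∀ k, e k ≠ c := fun k h => by simp [e, c, Fin.ext_iff] at h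
  have hspan := Polynomial.span_range_eq_top_of_forall_exists_eval_ne_zero (fun j => P r (e j))
    (by simpa [hP] using hrow)
  obtain ⟨p, hp⟩ : ∃ p : Fin (n - 1) → Polynomial ℂ,
      ∑ j, p j • P r (e j) = Polynomial.X - P r c :=
    (Submodule.mem_span_range_iff_exists_fun _).mp (hspan ▸ Submodule.mem_top)
  have hbezout : ∀ t, ∑ j, f t r (e j) * (p j).eval t = t - f t r c := fun t => by
    simpa [hP, Polynomial.eval_finsetSum, mul_comm] using congrArg (Polynomial.eval t) hp
  set F : Fin n × Fin (n - 1) → Polynomial ℂ := fun s => P s.1 (e s.2)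
  have hadjoin : Algebra.adjoin ℂ (Set.range F) = ⊤ :=
    Polynomial.adjoin_range_eq_top_of_injective F
    (fun x y hxy => hinj' (by ext i j; simpa [hP] using congrFun hxy (i, j)))
    (fun t => by
      by_contra! h
      exact himm' t (by ext i j; simpa using h (i, j)))
  have hH : ∀ k, ∃ G, MvPolynomial.aeval F G = p k := fun k =>
    (AlgHom.mem_range _).mp (by rw [← Algebra.adjoin_range_eq_range_aeval, hadjoin]; trivial)
  choose H hH using hH
  have hHf : ∀ t, evalCols e H (f t) = fun k => (p k).eval t := fun t => by
    ext k
    rw [← hH k, ← Polynomial.coe_aeval_eq_eval, MvPolynomial.comp_aeval_apply]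
    simp [evalCols, F, hP]
  refine ⟨⟨p, hbezout⟩, SpecialLinearGroup.mulColShear he H, slAlgAut_mulColShear he H,
    fun t => ?_⟩
  simp only [SpecialLinearGroup.mulColShear, mul_colShear_apply, if_pos, hHf, hbezout]
  ring
end
end
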